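/- If X is a geodesic metric space in which every geodesic triangle is δ-slim, then X is Gromov 8δ-hyperbolic: for any four points x₁,x₂,x₃,x₄ ∈ X, d(x₁,x₂) + d(x₃,x₄) ≤ max{d(x₁,x₃)+d(x₂,x₄), d(x₁,x₄)+d(x₂,x₃)} + 8δ. -/

import Mathlib

/-- `γ` is a geodesic from `x` to `y`: an isometric embedding of `[0, dist x y]`
with `γ 0 = x` and `γ (dist x y) = y`. -/
def IsGeodesicFrom {X : Type*} [MetricSpace X] (x y : X) (γ : ℝ → X) : Prop :=
  γ 0 = x ∧ γ (dist x y) = y ∧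
    ∀ s ∈ Set.Icc (0:ℝ) (dist x y), ∀ t ∈ Set.Icc (0:ℝ) (dist x y),
      dist (γ s) (γ t) = |s - t|

/-- A metric space is geodesic if every pair of points is joined by a geodesic. -/
def GeodesicSpace (X : Type*) [MetricSpace X] : Prop :=
  ∀ x y : X, ∃ γ : ℝ → X, IsGeodesicFrom x y γ

/-- Every geodesic triangle of `X` is δ-slim: each side is contained in the closed
δ-neighbourhood of the union of the two other sides. -/
def SlimTriangles (X : Type*) [MetricSpace X] (δ : ℝ) : Prop :=
  ∀ (x₁ x₂ x₃ : X) (γ₁₂ γ₁₃ γ₂₃ : ℝ → X),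
    IsGeodesicFrom x₁ x₂ γ₁₂ → IsGeodesicFrom x₁ x₃ γ₁₃ → IsGeodesicFrom x₂ x₃ γ₂₃ →
    (∀ p ∈ γ₁₂ '' Set.Icc (0:ℝ) (dist x₁ x₂),
      ∃ q ∈ γ₁₃ '' Set.Icc (0:ℝ) (dist x₁ x₃) ∪ γ₂₃ '' Set.Icc (0:ℝ) (dist x₂ x₃),
        dist p q ≤ δ) ∧
    (∀ p ∈ γ₁₃ '' Set.Icc (0:ℝ) (dist x₁ x₃),
      ∃ q ∈ γ₁₂ '' Set.Icc (0:ℝ) (dist x₁ x₂) ∪ γ₂₃ '' Set.Icc (0:ℝ) (dist x₂ x₃),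
        dist p q ≤ δ) ∧
    (∀ p ∈ γ₂₃ '' Set.Icc (0:ℝ) (dist x₂ x₃),
      ∃ q ∈ γ₁₂ '' Set.Icc (0:ℝ) (dist x₁ x₂) ∪ γ₁₃ '' Set.Icc (0:ℝ) (dist x₁ x₃),
        dist p q ≤ δ)

/-!
On a side `[x, y]` of a geodesic triangle `x y z`, the points δ-close to `[x, z]` and those
δ-close to `[y, z]` form two closed sets covering the side and containing `x` and `y`
respectively; by connectedness some point `p` of the side is δ-close to both, so that `p` lies
2δ-almost on geodesics from `x` to `z` and from `y` to `z`. Given four points, choose such points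
`p` and `q` on one geodesic `[x₁, x₂]` for the apexes `x₃` and `x₄`. If `p` comes before `q`, then
`d(x₁, x₂) + d(x₃, x₄) ≤ d(x₂, p) + d(p, x₃) + d(x₁, q) + d(q, x₄) ≤ d(x₂, x₃) + d(x₁, x₄) + 4δ`,
and symmetrically otherwise.
-/

open Set Metric

section

variable {X : Type*} [MetricSpace X]

namespace IsGeodesicFrom

variable {x y : X} {γ : ℝ → X}

theorem dist_eq (hγ : IsGeodesicFrom x y γ) {s t : ℝ} (hs : s ∈ Icc 0 (dist x y))
    (ht : t ∈ Icc 0 (dist x y)) : dist (γ s) (γ t) = |s - t| :=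
  hγ.2.2 s hs t ht

theorem dist_left (hγ : IsGeodesicFrom x y γ) {t : ℝ} (ht : t ∈ Icc 0 (dist x y)) :
    dist x (γ t) = t := by
  rw [← hγ.1, hγ.dist_eq ⟨le_rfl, dist_nonneg⟩ ht, zero_sub, abs_neg, abs_of_nonneg ht.1]

theorem dist_right (hγ : IsGeodesicFrom x y γ) {t : ℝ} (ht : t ∈ Icc 0 (dist x y)) :
    dist (γ t) y = dist x y - t := by
  conv_lhs => rw [← hγ.2.1]
  rw [hγ.dist_eq ht ⟨dist_nonneg, le_rfl⟩, abs_sub_comm, abs_of_nonneg (sub_nonneg.2 ht.2)]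

theorem dist_left_add_dist_right (hγ : IsGeodesicFrom x y γ) {t : ℝ}
    (ht : t ∈ Icc 0 (dist x y)) : dist x (γ t) + dist (γ t) y = dist x y := by
  rw [hγ.dist_left ht, hγ.dist_right ht]
  ring

theorem continuousOn (hγ : IsGeodesicFrom x y γ) : ContinuousOn γ (Icc 0 (dist x y)) := by
  refine LipschitzOnWith.continuousOn (K := 1) fun s hs t ht ↦ ?_
  rw [edist_dist, edist_dist, hγ.dist_eq hs ht, ENNReal.coe_one, one_mul, Real.dist_eq]

theorem isCompact_image (hγ : IsGeodesicFrom x y γ) : IsCompact (γ '' Icc 0 (dist x y)) :=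
  isCompact_Icc.image_of_continuousOn hγ.continuousOn

theorem dist_add_dist_le_of_mem_cthickening (hγ : IsGeodesicFrom x y γ) {δ : ℝ} (hδ : 0 ≤ δ)
    {p : X} (hp : p ∈ cthickening δ (γ '' Icc 0 (dist x y))) :
    dist x p + dist p y ≤ dist x y + 2 * δ := by
  rw [hγ.isCompact_image.cthickening_eq_biUnion_closedBall hδ] at hp
  obtain ⟨_, ⟨t, ht, rfl⟩, hpt⟩ := mem_iUnion₂.1 hp
  rw [mem_closedBall] at hpt
  have := hγ.dist_left_add_dist_right ht
  linarith [dist_triangle x (γ t) p, dist_triangle p (γ t) y, dist_comm p (γ t)]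

theorem dist_add_dist_le (hγ : IsGeodesicFrom x y γ) {s t : ℝ} (hs : s ∈ Icc 0 (dist x y))
    (ht : t ∈ Icc 0 (dist x y)) (hst : s ≤ t) (z w : X) :
    dist x y + dist z w ≤ (dist y (γ s) + dist (γ s) z) + (dist x (γ t) + dist (γ t) w) := by
  have hzw : dist z w ≤ dist (γ s) z + (t - s) + dist (γ t) w := by
    calc dist z w ≤ dist z (γ s) + dist (γ s) (γ t) + dist (γ t) w := dist_triangle4 _ _ _ _
      _ = dist (γ s) z + (t - s) + dist (γ t) w := by
        rw [dist_comm z, hγ.dist_eq hs ht, abs_sub_comm, abs_of_nonneg (sub_nonneg.2 hst)]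
  rw [dist_comm y, hγ.dist_right hs, hγ.dist_left ht]
  linarith

end IsGeodesicFrom

theorem SlimTriangles.exists_near_both_sides {δ : ℝ} (hslim : SlimTriangles X δ) (hδ : 0 ≤ δ)
    (hgeo : GeodesicSpace X) {x y : X} {γ : ℝ → X} (hγ : IsGeodesicFrom x y γ) (z : X) :
    ∃ t ∈ Icc 0 (dist x y), dist x (γ t) + dist (γ t) z ≤ dist x z + 2 * δ ∧
      dist y (γ t) + dist (γ t) z ≤ dist y z + 2 * δ := by
  obtain ⟨γ₁, hγ₁⟩ := hgeo x z
  obtain ⟨γ₂, hγ₂⟩ := hgeo y z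
  set C := cthickening δ (γ₁ '' Icc 0 (dist x z))
  set D := cthickening δ (γ₂ '' Icc 0 (dist y z))
  have hcover : γ '' Icc 0 (dist x y) ⊆ C ∪ D := by
    rintro p hp
    obtain ⟨q, hq | hq, hpq⟩ := (hslim x y z γ γ₁ γ₂ hγ hγ₁ hγ₂).1 p hp
    · exact Or.inl (mem_cthickening_of_dist_le p q δ _ hq hpq)
    · exact Or.inr (mem_cthickening_of_dist_le p q δ _ hq hpq)
  have hxC : x ∈ C := self_subset_cthickening _ ⟨0, ⟨le_rfl, dist_nonneg⟩, hγ₁.1⟩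
  have hyD : y ∈ D := self_subset_cthickening _ ⟨0, ⟨le_rfl, dist_nonneg⟩, hγ₂.1⟩
  obtain ⟨_, ⟨t, ht, rfl⟩, htC, htD⟩ :=
    isPreconnected_closed_iff.1 (isPreconnected_Icc.image γ hγ.continuousOn) C D
      isClosed_cthickening isClosed_cthickening hcover
      ⟨x, ⟨0, ⟨le_rfl, dist_nonneg⟩, hγ.1⟩, hxC⟩ ⟨y, ⟨_, ⟨dist_nonneg, le_rfl⟩, hγ.2.1⟩, hyD⟩
  exact ⟨t, ht, hγ₁.dist_add_dist_le_of_mem_cthickening hδ htC,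
    hγ₂.dist_add_dist_le_of_mem_cthickening hδ htD⟩

end

/-- A geodesic space with δ-slim triangles is Gromov 8δ-hyperbolic. -/
theorem stmt16 {X : Type*} [MetricSpace X] (hgeo : GeodesicSpace X)
    (δ : ℝ) (hδ : 0 ≤ δ) (hslim : SlimTriangles X δ) :
    ∀ x₁ x₂ x₃ x₄ : X,
      dist x₁ x₂ + dist x₃ x₄ ≤
        max (dist x₁ x₃ + dist x₂ x₄) (dist x₁ x₄ + dist x₂ x₃) + 8 * δ := by
  intro x₁ x₂ x₃ x₄
  obtain ⟨γ, hγ⟩ := hgeo x₁ x₂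
  obtain ⟨s, hs, h13, h23⟩ := hslim.exists_near_both_sides hδ hgeo hγ x₃
  obtain ⟨t, ht, h14, h24⟩ := hslim.exists_near_both_sides hδ hgeo hγ x₄
  have h4δ : dist x₁ x₂ + dist x₃ x₄ ≤
      max (dist x₁ x₃ + dist x₂ x₄) (dist x₁ x₄ + dist x₂ x₃) + 4 * δ := by
    rcases le_total s t with hst | hts
    · have := hγ.dist_add_dist_le hs ht hst x₃ x₄
      linarith [le_max_right (dist x₁ x₃ + dist x₂ x₄) (dist x₁ x₄ + dist x₂ x₃)]
    · have := hγ.dist_add_dist_le ht hs hts x₄ x₃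
      linarith [le_max_left (dist x₁ x₃ + dist x₂ x₄) (dist x₁ x₄ + dist x₂ x₃), dist_comm x₃ x₄]
  linarith
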